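/- arXiv:2511.09434 — 2 statements merged into one kernel-verified Lean document; each statement's English description precedes it below -/
import Mathlib

section
/- For fixed ϱ, λ ∈ (0, 1/2], the function p ↦ q⋆(p, ϱ, λ) = (1 - p²/((1-p)²(1-ϱ)))·(1 - p²(λ-ϱ)/(1-ϱ)) is strictly decreasing on [0, p_c(ϱ)). -/
/-!
Write `s = 1 - ϱ`, `c = λ - ϱ` and `r = √s`, so that `p_c = r / (1 + r)`. On `[0, p_c)` we have
`p < r (1 - p)`, i.e. `p² < (1 - p)² s`, so both `t = p² / s` and `w = u (1 - p)³`, where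
`u = 1 - p² / ((1 - p)² s)` is the first factor, lie in `[0, 1]`. The derivative of `q⋆` is
`-(2p / ((1 - p)³ s)) · (1 + c (w - t))`, and `|c| < 1` makes the second factor positive.
-/

open Set

/-- The paper's `q⋆(p, ϱ, λ)` is `qstar (1 - ϱ) (λ - ϱ) p`. -/
noncomputable def qstar (s c p : ℝ) : ℝ :=
  (1 - p ^ 2 / ((1 - p) ^ 2 * s)) * (1 - p ^ 2 * c / s)

theorem hasDerivAt_qstar {s c p : ℝ} (hs : s ≠ 0) (hp : p ≠ 1) :
    HasDerivAt (qstar s c)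
      (-(2 * p / ((1 - p) ^ 3 * s)) *
        (1 + c * ((1 - p ^ 2 / ((1 - p) ^ 2 * s)) * (1 - p) ^ 3 - p ^ 2 / s))) p := by
  have h1p : 1 - p ≠ 0 := sub_ne_zero.mpr hp.symm
  have hden : HasDerivAt (fun q : ℝ => (1 - q) ^ 2 * s) (2 * (1 - p) * (-1) * s) p := by
    simpa using (((hasDerivAt_id p).const_sub 1).pow 2).mul_const s
  have hu : HasDerivAt (fun q : ℝ => 1 - q ^ 2 / ((1 - q) ^ 2 * s))
      (-((2 * p * ((1 - p) ^ 2 * s) - p ^ 2 * (2 * (1 - p) * (-1) * s)) /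
        ((1 - p) ^ 2 * s) ^ 2)) p := by
    simpa using ((hasDerivAt_pow 2 p).div hden (by positivity)).const_sub 1
  have hv : HasDerivAt (fun q : ℝ => 1 - q ^ 2 * c / s) (-(2 * p * c / s)) p := by
    simpa using (((hasDerivAt_pow 2 p).mul_const c).div_const s).const_sub 1
  refine (hu.mul hv).congr_deriv ?_
  field_simp
  ring

theorem one_add_mul_sub_pos {a b c : ℝ} (hc : |c| < 1) (ha : a ∈ Icc 0 1) (hb : b ∈ Icc 0 1) :
    0 < 1 + c * (a - b) := by
  have hab : |a - b| ≤ 1 :=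
    abs_sub_le_iff.mpr ⟨by linarith [ha.2, hb.1], by linarith [ha.1, hb.2]⟩
  have hsmall : |c * (a - b)| < 1 := by
    rw [abs_mul]
    nlinarith [abs_nonneg c, abs_nonneg (a - b)]
  linarith [neg_abs_le (c * (a - b))]

theorem lt_one_and_sq_lt_of_mem_Ico {s p : ℝ} (hs : 0 < s) (hp : p ∈ Ico 0 (√s / (1 + √s))) :
    p < 1 ∧ p ^ 2 < (1 - p) ^ 2 * s := by
  obtain ⟨hp0, hpc⟩ := hp
  have hr : 0 < √s := Real.sqrt_pos.mpr hs
  have hlt : p < √s * (1 - p) := by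
    rw [lt_div_iff₀ (by positivity)] at hpc
    linarith
  have hp1 : p < 1 := by nlinarith
  refine ⟨hp1, ?_⟩
  calc p ^ 2 < (√s * (1 - p)) ^ 2 := by gcongr
    _ = (1 - p) ^ 2 * s := by rw [mul_pow, Real.sq_sqrt hs.le]; ring

theorem qstar_strictAntiOn {s c : ℝ} (hs : 0 < s) (hc : |c| < 1) :
    StrictAntiOn (qstar s c) (Ico 0 (√s / (1 + √s))) := by
  have hderiv : ∀ p ∈ Ico 0 (√s / (1 + √s)), HasDerivAt (qstar s c) _ p := fun p hp =>
    hasDerivAt_qstar hs.ne' (lt_one_and_sq_lt_of_mem_Ico hs hp).1.ne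
  refine strictAntiOn_of_hasDerivWithinAt_neg (convex_Ico _ _)
    (fun p hp => (hderiv p hp).continuousAt.continuousWithinAt)
    (fun p hp => (hderiv p (interior_subset hp)).hasDerivWithinAt) fun p hp => ?_
  rw [interior_Ico] at hp
  obtain ⟨hp1, hsq⟩ := lt_one_and_sq_lt_of_mem_Ico hs (Ioo_subset_Ico_self hp)
  have h1p : 0 < 1 - p := by linarith
  have h1p' : 1 - p ≤ 1 := by linarith [hp.1]
  have hu0 : 0 < 1 - p ^ 2 / ((1 - p) ^ 2 * s) :=
    sub_pos.mpr ((div_lt_one (by positivity)).mpr hsq)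
  have hu1 : 1 - p ^ 2 / ((1 - p) ^ 2 * s) ≤ 1 := sub_le_self _ (by positivity)
  have ht : p ^ 2 / s ∈ Icc 0 1 := by
    refine ⟨by positivity, (div_le_one hs).mpr ?_⟩
    nlinarith [pow_le_one₀ h1p.le h1p' (n := 2)]
  have hw : (1 - p ^ 2 / ((1 - p) ^ 2 * s)) * (1 - p) ^ 3 ∈ Icc 0 1 :=
    ⟨by positivity, mul_le_one₀ hu1 (by positivity) (pow_le_one₀ h1p.le h1p')⟩
  have hslope : 0 < 2 * p / ((1 - p) ^ 3 * s) := by have := hp.1; positivity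
  rw [neg_mul, neg_lt_zero]
  exact mul_pos hslope (one_add_mul_sub_pos hc hw ht)

theorem sqrt_one_sub_sub_div_eq {ϱ : ℝ} (h0 : 0 < ϱ) (h1 : ϱ ≤ 1) :
    (√(1 - ϱ) - (1 - ϱ)) / ϱ = √(1 - ϱ) / (1 + √(1 - ϱ)) := by
  have hr2 : √(1 - ϱ) ^ 2 = 1 - ϱ := Real.sq_sqrt (by linarith)
  rw [div_eq_div_iff h0.ne' (by positivity)]
  linear_combination hr2

theorem qstar_strictAnti (ϱ lam : ℝ)
    (hϱ : ϱ ∈ Set.Ioc (0:ℝ) (1/2)) (hlam : lam ∈ Set.Ioc (0:ℝ) (1/2)) :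
    StrictAntiOn
      (fun p : ℝ =>
        (1 - p^2 / ((1 - p)^2 * (1 - ϱ))) * (1 - p^2 * (lam - ϱ) / (1 - ϱ)))
      (Set.Ico (0:ℝ) ((Real.sqrt (1 - ϱ) - (1 - ϱ)) / ϱ)) := by
  obtain ⟨hϱ0, hϱ2⟩ := hϱ
  obtain ⟨hlam0, hlam2⟩ := hlam
  rw [sqrt_one_sub_sub_div_eq hϱ0 (by linarith)]
  exact qstar_strictAntiOn (by linarith) (abs_lt.mpr ⟨by linarith, by linarith⟩)
end

section
/- Let V be a finite set with out-degrees (d⁺ₓ)ₓ∈V all ≥ 2, m = Σₓ d⁺ₓ, and suppose Σₓ (d⁻ₓ/m)(1/d⁺ₓ) = ϱ and (1/|V|)Σₓ 1/d⁺ₓ = λ. For 0 ≤ p < p_c(ϱ) set z⋆ = p²/((1-p)²(1-ϱ)). Then (1/|V|) Σₓ (1 - (p₀(d⁺ₓ) + p₁(d⁺ₓ)z⋆ + p₂(d⁺ₓ)z⋆²)) = (1 - z⋆)·(1 - p²(λ - ϱ)/(1-ϱ)) = q⋆(p, ϱ, λ), where p₀(d)=p², p₁(d)=(1-p)(2(1-1/d)p+(1/d)(1+p)),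 p₂(d)=(1-1/d)(1-p)². -/
open Finset

/- Since `z = 1` is a fixed point of every offspring generating function `f_d`, the survival
probability `1 - f_d(z⋆)` carries a factor `1 - z⋆`, and what remains is affine in `1/d`.
Averaging over the vertices therefore only sees the mean `λ` of `1/d⁺ₓ`, and the defining relation
`(1-p)² z⋆ (1-ϱ) = p²` turns the result into `q⋆`. -/

lemma one_sub_offspring_pgf_eq (p t z : ℝ) :
    1 - (p^2 + (1 - p) * (2 * (1 - t) * p + t * (1 + p)) * z + (1 - t) * (1 - p)^2 * z^2)
      = (1 - z) * (1 - p^2 + (1 - p)^2 * z) - (1 - z) * ((1 - p)^2 * z) * t := by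
  ring

lemma one_div_card_mul_sum_sub_mul {K V : Type*} [Field K] [CharZero K] [Fintype V] [Nonempty V]
    (a b : K) (g : V → K) :
    (1 / Fintype.card V : K) * ∑ x, (a - b * g x)
      = a - b * ((1 / Fintype.card V : K) * ∑ x, g x) := by
  have hcard : (Fintype.card V : K) ≠ 0 := Nat.cast_ne_zero.mpr Fintype.card_ne_zero
  rw [sum_sub_distrib, sum_const, ← mul_sum, card_univ, nsmul_eq_mul]
  field_simp

lemma sqrt_one_sub_sub_div_le_one {ϱ : ℝ} (hϱ0 : 0 < ϱ) :
    (Real.sqrt (1 - ϱ) - (1 - ϱ)) / ϱ ≤ 1 := by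
  rw [div_le_one hϱ0]
  linarith [Real.sqrt_le_one.mpr (by linarith : 1 - ϱ ≤ 1)]

theorem average_survival_eq_qstar_general
    {V : Type*} [Fintype V] [Nonempty V]
    (dout : V → ℕ)
    (ϱ lam p : ℝ)
    (hlam : ((1 : ℝ) / Fintype.card V) * (∑ x, 1 / (dout x : ℝ)) = lam)
    (hϱmem : ϱ ∈ Set.Ioc (0:ℝ) (1/2))
    (hpc : p < (Real.sqrt (1 - ϱ) - (1 - ϱ)) / ϱ) :
    ((1 : ℝ) / Fintype.card V) *
      (∑ x, (1 - (p^2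
        + (1 - p) * (2 * (1 - 1/(dout x : ℝ)) * p + (1/(dout x : ℝ)) * (1 + p))
            * (p^2 / ((1 - p)^2 * (1 - ϱ)))
        + (1 - 1/(dout x : ℝ)) * (1 - p)^2
            * (p^2 / ((1 - p)^2 * (1 - ϱ)))^2)))
    = (1 - p^2 / ((1 - p)^2 * (1 - ϱ))) * (1 - p^2 * (lam - ϱ) / (1 - ϱ)) := by
  obtain ⟨hϱ0, hϱ_le⟩ := hϱmem
  have hϱ1 : 1 - ϱ ≠ 0 := by linarith
  have hp1 : 1 - p ≠ 0 := by linarith [sqrt_one_sub_sub_div_le_one hϱ0]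
  set z := p^2 / ((1 - p)^2 * (1 - ϱ)) with hz
  have hfixed : (1 - p)^2 * z = p^2 / (1 - ϱ) := by
    rw [hz]
    field_simp
  simp_rw [one_sub_offspring_pgf_eq, one_div_card_mul_sum_sub_mul, hlam, hfixed]
  field_simp
  ring

theorem average_survival_eq_qstar
    {V : Type*} [Fintype V] [Nonempty V]
    (din dout : V → ℕ) (hdout : ∀ x, 2 ≤ dout x)
    (m : ℕ) (hm : (∑ x, dout x) = m)
    (ϱ lam p : ℝ)
    (hϱ : (∑ x, ((din x : ℝ) / m) * (1 / (dout x : ℝ))) = ϱ)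
    (hlam : ((1 : ℝ) / Fintype.card V) * (∑ x, 1 / (dout x : ℝ)) = lam)
    (hϱmem : ϱ ∈ Set.Ioc (0:ℝ) (1/2))
    (hp : 0 ≤ p) (hpc : p < (Real.sqrt (1 - ϱ) - (1 - ϱ)) / ϱ) :
    ((1 : ℝ) / Fintype.card V) *
      (∑ x, (1 - (p^2
        + (1 - p) * (2 * (1 - 1/(dout x : ℝ)) * p + (1/(dout x : ℝ)) * (1 + p))
            * (p^2 / ((1 - p)^2 * (1 - ϱ)))
        + (1 - 1/(dout x : ℝ)) * (1 - p)^2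
            * (p^2 / ((1 - p)^2 * (1 - ϱ)))^2)))
    = (1 - p^2 / ((1 - p)^2 * (1 - ϱ))) * (1 - p^2 * (lam - ϱ) / (1 - ϱ)) :=
  average_survival_eq_qstar_general dout ϱ lam p hlam hϱmem hpc
end
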